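/- For 0 < s < 1, the restriction V̄₀ of V₀ to the singular fibre y = 0 (with u = εs) satisfies the exact formula 4πε V̄₀ = 2(1−s²)^{−1} + 1/s − 2 log ε + G + 2g(s), where G = −2 log 2 + 2γ − 2 and g(s) = Σ_{n≥1} (ζ(2n+1) − 1) s^{2n}, which has radius of convergence at least 2. -/

import Mathlib

open Real Filter

/-- The power series `g(s) = Σ_{n≥1} (ζ(2n+1) - 1) s^{2n}`. -/
noncomputable def ovg (s : ℝ) : ℝ :=
  ∑' n : ℕ, ((riemannZeta (2 * (n : ℂ) + 3)).re - 1) * s ^ (2 * n + 2)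

/-!
Pairing the terms `n` and `-n` of the lattice sum at `u = εs`, `y = 0` leaves
`1/(εs) - a₀` from `n = 0` and `ε⁻¹ (1/(n+s) + 1/(n-s) - 2/n) = ε⁻¹ · 2s²/(n(n²-s²))` for `n ≥ 1`.
Expanding the latter geometrically in `s²/n²` and summing over `n` first (all terms are
nonnegative) gives `Σ_k 2 s^(2k+2) ζ(2k+3)`; splitting `ζ = 1 + (ζ - 1)` yields
`2s²/(1-s²) + 2g(s)`. The radius of convergence comes from `ζ(3+k) - 1 ≤ (ζ(3) - 1)/2^k`.
-/

open Finset Topology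

lemma hasSum_one_div_nat_add_one_pow_riemannZeta_re {p : ℕ} (hp : 1 < p) :
    HasSum (fun m : ℕ => 1 / ((m : ℝ) + 1) ^ p) (riemannZeta p).re := by
  have hs : Summable (fun m : ℕ => 1 / ((m : ℝ) + 1) ^ p) := by
    simpa using (summable_nat_add_iff 1).mpr (Real.summable_one_div_nat_pow.mpr hp)
  have hC := Complex.hasSum_ofReal.mpr hs.hasSum
  have hzeta : riemannZeta p = ↑(∑' m : ℕ, 1 / ((m : ℝ) + 1) ^ p) := by
    rw [zeta_eq_tsum_one_div_nat_add_one_cpow (by simpa using hp), ← hC.tsum_eq]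
    push_cast
    simp only [Complex.cpow_natCast]
  rw [hzeta, Complex.ofReal_re]
  exact hs.hasSum

lemma hasSum_one_div_nat_add_two_pow {p : ℕ} (hp : 1 < p) :
    HasSum (fun m : ℕ => 1 / ((m : ℝ) + 2) ^ p) ((riemannZeta p).re - 1) := by
  have h := (hasSum_nat_add_iff' 1).mpr (hasSum_one_div_nat_add_one_pow_riemannZeta_re hp)
  simpa [add_assoc, one_add_one_eq_two] using h

lemma riemannZeta_re_sub_one_nonneg {p : ℕ} (hp : 1 < p) : 0 ≤ (riemannZeta p).re - 1 :=
  (hasSum_one_div_nat_add_two_pow hp).nonneg fun _ => by positivity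

lemma riemannZeta_add_re_sub_one_le {p : ℕ} (hp : 1 < p) (k : ℕ) :
    (riemannZeta ↑(p + k)).re - 1 ≤ ((riemannZeta p).re - 1) / 2 ^ k := by
  refine hasSum_le (fun m => ?_) (hasSum_one_div_nat_add_two_pow (by omega))
    ((hasSum_one_div_nat_add_two_pow hp).div_const _)
  have h2 : (2 : ℝ) ^ k ≤ ((m : ℝ) + 2) ^ k := pow_le_pow_left₀ zero_le_two (by simp) k
  rw [div_div, pow_add]
  gcongr

lemma summable_riemannZeta_sub_one_mul_pow {t : ℝ} (ht : |t| < 2) :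
    Summable (fun n : ℕ => ((riemannZeta (2 * (n : ℂ) + 3)).re - 1) * t ^ (2 * n + 2)) := by
  have hzeta : ∀ n : ℕ, riemannZeta (2 * (n : ℂ) + 3) = riemannZeta ↑(3 + 2 * n) := fun n => by
    push_cast; ring_nf
  have hpow : ∀ n : ℕ, t ^ (2 * n + 2) = t ^ 2 * (t ^ 2) ^ n := fun n => by ring
  have ht2 : t ^ 2 / 4 < 1 := by
    rw [div_lt_one four_pos, show (4 : ℝ) = 2 ^ 2 by norm_num, sq_lt_sq, abs_two]; exact ht
  refine Summable.of_nonneg_of_le (fun n => ?_) (fun n => ?_)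
    ((summable_geometric_of_lt_one (by positivity) ht2).mul_left
      (((riemannZeta 3).re - 1) * t ^ 2))
  · rw [hzeta, hpow]
    exact mul_nonneg (riemannZeta_re_sub_one_nonneg (by omega)) (by positivity)
  · calc ((riemannZeta (2 * (n : ℂ) + 3)).re - 1) * t ^ (2 * n + 2)
        ≤ ((riemannZeta 3).re - 1) / 2 ^ (2 * n) * (t ^ 2 * (t ^ 2) ^ n) := by
          rw [hzeta, hpow]
          gcongr
          exact_mod_cast riemannZeta_add_re_sub_one_le (p := 3) (by norm_num) (2 * n)
      _ = ((riemannZeta 3).re - 1) * t ^ 2 * (t ^ 2 / 4) ^ n := by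
          rw [pow_mul, div_pow]; ring

lemma hasSum_two_mul_pow_div_pow {s n : ℝ} (hn : 0 < n) (hs : |s| < n) :
    HasSum (fun k : ℕ => 2 * s ^ (2 * k + 2) / n ^ (2 * k + 3))
      (2 * s ^ 2 / (n * (n ^ 2 - s ^ 2))) := by
  have hsn : s ^ 2 < n ^ 2 := sq_lt_sq.mpr (by rwa [abs_of_pos hn])
  have hr : s ^ 2 / n ^ 2 < 1 := (div_lt_one (by positivity)).mpr hsn
  have hterm : (fun k : ℕ => 2 * s ^ (2 * k + 2) / n ^ (2 * k + 3))
      = fun k => 2 * s ^ 2 / n ^ 3 * (s ^ 2 / n ^ 2) ^ k := by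
    ext k
    rw [div_pow, ← pow_mul, ← pow_mul]
    field_simp
    ring
  have hsum : 2 * s ^ 2 / (n * (n ^ 2 - s ^ 2)) = 2 * s ^ 2 / n ^ 3 * (1 - s ^ 2 / n ^ 2)⁻¹ := by
    have : n ^ 2 - s ^ 2 ≠ 0 := by linarith
    field_simp
  rw [hterm, hsum]
  exact (hasSum_geometric_of_lt_one (by positivity) hr).mul_left _

lemma hasSum_two_mul_sq_div_mul_sq_sub_sq {s : ℝ} (hs : |s| < 1) :
    HasSum (fun m : ℕ => 2 * s ^ 2 / (((m : ℝ) + 1) * (((m : ℝ) + 1) ^ 2 - s ^ 2)))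
      (2 * (1 - s ^ 2)⁻¹ - 2 + 2 * ovg s) := by
  let F : ℕ × ℕ → ℝ := fun km => 2 * s ^ (2 * km.1 + 2) / ((km.2 : ℝ) + 1) ^ (2 * km.1 + 3)
  have hs2 : s ^ 2 < 1 := by simpa using sq_lt_sq.mpr (hs.trans_eq abs_one.symm)
  have hF0 : 0 ≤ F := fun km => by
    have := (even_two_mul (km.1 + 1)).pow_nonneg s
    simp only [F, Pi.zero_apply]
    rw [mul_add_one] at this
    positivity
  have hrow : ∀ m : ℕ, HasSum (fun k => F (k, m))
      (2 * s ^ 2 / (((m : ℝ) + 1) * (((m : ℝ) + 1) ^ 2 - s ^ 2))) := fun m =>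
    hasSum_two_mul_pow_div_pow (n := (m : ℝ) + 1) (by positivity)
      (hs.trans_le (le_add_of_nonneg_left m.cast_nonneg))
  have hcol : ∀ k : ℕ, HasSum (fun m => F (k, m))
      (2 * s ^ (2 * k + 2) * (riemannZeta ↑(2 * k + 3)).re) := fun k => by
    simpa only [F, mul_one_div] using
      (hasSum_one_div_nat_add_one_pow_riemannZeta_re (p := 2 * k + 3) (by omega)).mul_left
        (2 * s ^ (2 * k + 2))
  have hgeom : HasSum (fun k : ℕ => 2 * s ^ (2 * k + 2)) (2 * (1 - s ^ 2)⁻¹ - 2) := by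
    have hterm : (fun k : ℕ => 2 * s ^ (2 * k + 2)) = fun k => 2 * s ^ 2 * (s ^ 2) ^ k := by
      ext k; ring
    have hsum : 2 * (1 - s ^ 2)⁻¹ - 2 = 2 * s ^ 2 * (1 - s ^ 2)⁻¹ := by
      have : 1 - s ^ 2 ≠ 0 := by linarith
      field_simp; ring
    rw [hterm, hsum]
    exact (hasSum_geometric_of_lt_one (sq_nonneg s) hs2).mul_left _
  have htotal : HasSum (fun k : ℕ => 2 * s ^ (2 * k + 2) * (riemannZeta ↑(2 * k + 3)).re)
      (2 * (1 - s ^ 2)⁻¹ - 2 + 2 * ovg s) := by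
    have hovg := (summable_riemannZeta_sub_one_mul_pow (hs.trans one_lt_two)).hasSum.mul_left 2
    refine (hgeom.add hovg).congr_fun fun k => ?_
    push_cast
    ring
  have hFs : Summable F := (summable_prod_of_nonneg hF0).mpr
    ⟨fun k => (hcol k).summable, htotal.summable.congr fun k => (hcol k).tsum_eq.symm⟩
  have hF : HasSum F (2 * (1 - s ^ 2)⁻¹ - 2 + 2 * ovg s) := by
    rw [htotal.unique (hFs.hasSum.prod_fiberwise hcol)]
    exact hFs.hasSum
  exact ((Equiv.prodComm ℕ ℕ).hasSum_iff.mpr hF).prod_fiberwise hrow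

lemma Finset.sum_Icc_neg_eq_add_sum_range {G : Type*} [AddCommGroup G] (f : ℤ → G) (N : ℕ) :
    ∑ n ∈ Icc (-(N : ℤ)) N, f n = f 0 + ∑ i ∈ range N, (f (i + 1) + f (-(i + 1))) := by
  induction N with
  | zero => simp
  | succ N ih =>
    rw [Nat.cast_succ, sum_Icc_succ_eq_add_endpoints, ih, sum_range_succ]
    abel

lemma HasSum.tendsto_sum_Icc_neg {G : Type*} [AddCommGroup G] [TopologicalSpace G]
    [ContinuousAdd G] {f : ℤ → G} {S : G} (h : HasSum (fun i : ℕ => f (i + 1) + f (-(i + 1))) S) :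
    Tendsto (fun N : ℕ => ∑ n ∈ Icc (-(N : ℤ)) N, f n) atTop (𝓝 (f 0 + S)) := by
  simp only [Finset.sum_Icc_neg_eq_add_sum_range]
  exact tendsto_const_nhds.add h.tendsto_sum_nat

lemma one_div_mul_abs_add_pair {ε s n : ℝ} (hε : 0 < ε) (hs : 0 ≤ s) (hn : s < n) :
    1 / (ε * |s + n|) + 1 / (ε * |s - n|) - 2 / (n * ε)
      = ε⁻¹ * (2 * s ^ 2 / (n * (n ^ 2 - s ^ 2))) := by
  rw [abs_of_pos (by linarith), abs_sub_comm, abs_of_pos (by linarith)]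
  have : n ^ 2 - s ^ 2 ≠ 0 := by nlinarith
  have : n - s ≠ 0 := by linarith
  have : s + n ≠ 0 := by linarith
  have : n ≠ 0 := by linarith
  field_simp
  ring

lemma mul_ne_intCast_mul {ε s : ℝ} (hε : ε ≠ 0) (hs0 : 0 < s) (hs1 : s < 1) (n : ℤ) :
    ε * s ≠ n * ε := fun hn => by
  have hsn : s = n := mul_left_cancel₀ hε (hn.trans (mul_comm _ _))
  have h0 : (0 : ℤ) < n := by exact_mod_cast hsn ▸ hs0
  have h1 : n < 1 := by exact_mod_cast hsn ▸ hs1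
  omega

/-- On the singular fibre `y = 0`, writing `u = εs` with `0 < s < 1`,
the Ooguri–Vafa function satisfies the exact formula
`4πε V̄₀ = 2(1-s²)⁻¹ + 1/s - 2 log ε + G + 2 g(s)` with `G = -2 log 2 + 2γ - 2`,
where `g(s) = Σ_{n≥1} (ζ(2n+1)-1)s^{2n}` has radius of convergence at least 2. -/
theorem statement5 (ε : ℝ) (hε : 0 < ε)
    (a : ℤ → ℝ)
    (ha0 : a 0 = 2 * (-Real.eulerMascheroniConstant + Real.log (2 * ε)) / ε)
    (ha : ∀ n : ℤ, n ≠ 0 → a n = 1 / ((|n| : ℝ) * ε))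
    (V₀ : ℝ → ℂ → ℝ)
    (hV : ∀ (u : ℝ) (y : ℂ),
      ¬ (y = 0 ∧ ∃ n : ℤ, u = (n : ℝ) * ε) → ‖y‖ < 1 →
      Tendsto (fun j : ℕ => (1 / (4 * π)) * ∑ n ∈ Finset.Icc (-(j : ℤ)) (j : ℤ),
          (1 / Real.sqrt ((u + (n : ℝ) * ε) ^ 2 + ‖y‖ ^ 2) - a |n|))
        atTop (nhds (V₀ u y)))
    (s : ℝ) (hs0 : 0 < s) (hs1 : s < 1) :
    4 * π * ε * V₀ (ε * s) 0
      = 2 * (1 - s ^ 2)⁻¹ + 1 / s - 2 * Real.log ε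
        + (-2 * Real.log 2 + 2 * Real.eulerMascheroniConstant - 2) + 2 * ovg s ∧
      ∀ t : ℝ, |t| < 2 →
        Summable (fun n : ℕ => ((riemannZeta (2 * (n : ℂ) + 3)).re - 1) * t ^ (2 * n + 2)) := by
  refine ⟨?_, fun t ht => summable_riemannZeta_sub_one_mul_pow ht⟩
  set f : ℤ → ℝ := fun n => 1 / √((ε * s + n * ε) ^ 2 + ‖(0 : ℂ)‖ ^ 2) - a |n| with hf
  have hf_apply : ∀ n : ℤ, f n = 1 / (ε * |s + n|) - a |n| := fun n => by
    simp only [hf, norm_zero, zero_pow two_ne_zero, add_zero, sqrt_sq_eq_abs]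
    rw [show ε * s + n * ε = ε * (s + n) by ring, abs_mul, abs_of_pos hε]
  have hpair : ∀ i : ℕ, f (i + 1) + f (-(i + 1))
      = ε⁻¹ * (2 * s ^ 2 / (((i : ℝ) + 1) * (((i : ℝ) + 1) ^ 2 - s ^ 2))) := fun i => by
    have ha' : ∀ n : ℤ, n ≠ 0 → a |n| = 1 / (|(n : ℝ)| * ε) := fun n hn => by
      rw [ha _ (abs_ne_zero.mpr hn), Int.cast_abs, abs_abs]
    rw [hf_apply, hf_apply, ha' _ (by omega), ha' _ (by omega), ← one_div_mul_abs_add_pair hε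
      hs0.le (by linarith [(i.cast_nonneg : (0 : ℝ) ≤ i)] : s < (i : ℝ) + 1)]
    push_cast
    rw [abs_neg, abs_of_pos (by positivity : (0 : ℝ) < i + 1), ← sub_eq_add_neg]
    ring
  have hlattice : ¬ ((0 : ℂ) = 0 ∧ ∃ n : ℤ, ε * s = n * ε) :=
    fun ⟨_, n, hn⟩ => mul_ne_intCast_mul hε.ne' hs0 hs1 n hn
  have hV0 : V₀ (ε * s) 0 = 1 / (4 * π) * (f 0 + ε⁻¹ * (2 * (1 - s ^ 2)⁻¹ - 2 + 2 * ovg s)) := by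
    refine tendsto_nhds_unique (hV _ _ hlattice (by simp))
      ((HasSum.tendsto_sum_Icc_neg ?_).const_mul _)
    refine ((hasSum_two_mul_sq_div_mul_sq_sub_sq ?_).mul_left ε⁻¹).congr_fun hpair
    rwa [abs_of_pos hs0]
  rw [hV0, hf_apply, abs_zero, ha0, Int.cast_zero, add_zero, abs_of_pos hs0,
    log_mul two_ne_zero hε.ne']
  field_simp
  ring
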